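/- Let h be a real antisymmetric (2n)×(2n) matrix and set A = Σ_{1 ≤ μ < ν ≤ 2n} h_{μν} c_μ c_ν. Then for every κ ∈ {0, 1, …, 2n} and every M ∈ B_κ, the conjugate exp(A) · M · exp(−A) also lies in B_κ; that is, each subspace B_κ is invariant under conjugation by exponentials of elements of the Lie algebra g = span_ℝ{c_μ c_ν : μ < ν}. -/

import Mathlib

open Matrix Complex
open scoped Kronecker

noncomputable section

abbrev QIdx (n : ℕ) := Fin n → Fin 2
abbrev NMat (n : ℕ) := Matrix (QIdx n) (QIdx n) ℂ
abbrev NMat2 (n : ℕ) := Matrix (QIdx n × QIdx n) (QIdx n × QIdx n) ℂ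

/-- The 2×2 Pauli X matrix. -/
def σX : Matrix (Fin 2) (Fin 2) ℂ := !![0, 1; 1, 0]
/-- The 2×2 Pauli Y matrix. -/
def σY : Matrix (Fin 2) (Fin 2) ℂ := !![0, -Complex.I; Complex.I, 0]
/-- The 2×2 Pauli Z matrix. -/
def σZ : Matrix (Fin 2) (Fin 2) ℂ := !![1, 0; 0, -1]

/-- Tensor (Kronecker) product of `n` one-qubit matrices, realized on index type `Fin n → Fin 2`. -/
def tensor {n : ℕ} (M : Fin n → Matrix (Fin 2) (Fin 2) ℂ) : NMat n :=
  Matrix.of fun f g => ∏ i, M i (f i) (g i)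

/-- The Jordan–Wigner Majorana operator `c_μ` (0-based index: `c_{2i} = Z^{⊗i} X I…`,
`c_{2i+1} = Z^{⊗i} Y I…`). -/
def majorana (n : ℕ) (μ : Fin (2 * n)) : NMat n :=
  tensor fun j =>
    if (j : ℕ) < (μ : ℕ) / 2 then σZ
    else if (j : ℕ) = (μ : ℕ) / 2 then (if (μ : ℕ) % 2 = 0 then σX else σY)
    else 1

/-- Ordered product `c^s` of the Majorana operators indexed by a subset `s`. -/
def cProd (n : ℕ) (s : Finset (Fin (2 * n))) : NMat n :=
  ((s.sort (· ≤ ·)).map (majorana n)).prod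

/-- The module `B_κ`: the complex span of products of `κ` distinct Majoranas. -/
def Bspace (n κ : ℕ) : Submodule ℂ (NMat n) :=
  Submodule.span ℂ {M | ∃ s : Finset (Fin (2 * n)), s.card = κ ∧ M = cProd n s}

/-- The Pauli string with `Z` on qubit `j` and identity elsewhere. -/
def pauliZ (n : ℕ) (j : Fin n) : NMat n := tensor fun k => if k = j then σZ else 1

/-- The Pauli string with `X` on qubits `j` and `j+1` and identity elsewhere. -/
def pauliXX (n : ℕ) (j : Fin n) : NMat n :=
  tensor fun k => if (k : ℕ) = (j : ℕ) ∨ (k : ℕ) = (j : ℕ) + 1 then σX else 1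

/-- The parity operator `P = Z^{⊗n}`. -/
def parity (n : ℕ) : NMat n := tensor fun _ => σZ

/-! The Majorana operators pairwise anticommute and square to `1`. Hence `c_μ c^s = ± c^{s'}`
with `s' = s ∪ {μ}` or `s \ {μ}`, and `c^s c_μ = (-1)^{|s \ {μ}|} c_μ c^s`. So `c_μ c_ν`
commutes with `c^s` unless exactly one of `μ, ν` lies in `s`, and in that case
`c_μ c_ν c^s = ± c^{s'}` with `|s'| = |s|`: the derivation `ad A = [A, ·]` preserves `B_κ`.
Left and right multiplication commute, so `exp A · M · exp (-A) = exp (ad A) M`, and `exp (ad A)`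
preserves the closed subspace `B_κ` because `ad A` does. -/

section MulRingHom

variable (𝕂 𝔸 : Type*) [NontriviallyNormedField 𝕂] [NormedRing 𝔸] [NormedAlgebra 𝕂 𝔸]

def ContinuousLinearMap.mulLeftRingHom : 𝔸 →+* (𝔸 →L[𝕂] 𝔸) where
  toFun := ContinuousLinearMap.mul 𝕂 𝔸
  map_one' := ContinuousLinearMap.ext one_mul
  map_mul' x y := ContinuousLinearMap.ext (mul_assoc x y)
  map_zero' := map_zero _
  map_add' := map_add _

def ContinuousLinearMap.mulRightRingHom : 𝔸ᵐᵒᵖ →+* (𝔸 →L[𝕂] 𝔸) where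
  toFun x := (ContinuousLinearMap.mul 𝕂 𝔸).flip x.unop
  map_one' := ContinuousLinearMap.ext mul_one
  map_mul' x y := ContinuousLinearMap.ext fun z => (mul_assoc z _ _).symm
  map_zero' := by simp
  map_add' x y := by simp

end MulRingHom

section Stabilizer

variable {𝕂 E : Type*} [NontriviallyNormedField 𝕂] [NormedAddCommGroup E] [NormedSpace 𝕂 E]

variable (𝕂) in
def Submodule.stabilizerCLM (V : Submodule 𝕂 E) : Subalgebra 𝕂 (E →L[𝕂] E) where
  carrier := {T | ∀ v ∈ V, T v ∈ V}
  mul_mem' hS hT v hv := hS _ (hT v hv)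
  one_mem' _ hv := hv
  add_mem' hS hT v hv := V.add_mem (hS v hv) (hT v hv)
  zero_mem' _ _ := V.zero_mem
  algebraMap_mem' a _ hv := V.smul_mem a hv

theorem Submodule.isClosed_stabilizerCLM {V : Submodule 𝕂 E} (hV : IsClosed (V : Set E)) :
    IsClosed (V.stabilizerCLM 𝕂 : Set (E →L[𝕂] E)) := by
  have : (V.stabilizerCLM 𝕂 : Set (E →L[𝕂] E)) = ⋂ v ∈ V, (fun T => T v) ⁻¹' V := by
    ext T
    simp only [Set.mem_iInter, Set.mem_preimage]
    rfl
  rw [this]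
  exact isClosed_biInter fun v _ => hV.preimage (ContinuousLinearMap.apply 𝕂 E v).continuous

end Stabilizer

theorem exp_mul_mul_exp_neg_mem {𝕂 𝔸 : Type*} [RCLike 𝕂] [NormedRing 𝔸] [NormedAlgebra 𝕂 𝔸]
    [CompleteSpace 𝔸] {V : Submodule 𝕂 𝔸} (hV : IsClosed (V : Set 𝔸)) {A : 𝔸}
    (hA : ∀ M ∈ V, A * M - M * A ∈ V) {M : 𝔸} (hM : M ∈ V) :
    NormedSpace.exp A * M * NormedSpace.exp (-A) ∈ V := by
  let +nondep : NormedAlgebra ℚ 𝔸 := .restrictScalars ℚ 𝕂 𝔸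
  let +nondep : NormedAlgebra ℚ (𝔸 →L[𝕂] 𝔸) := .restrictScalars ℚ 𝕂 _
  set L := ContinuousLinearMap.mulLeftRingHom 𝕂 𝔸
  set R := ContinuousLinearMap.mulRightRingHom 𝕂 𝔸
  have hL : Continuous L := (ContinuousLinearMap.mul 𝕂 𝔸).continuous
  have hR : Continuous R :=
    (ContinuousLinearMap.mul 𝕂 𝔸).flip.continuous.comp MulOpposite.continuous_unop
  have hLR : Commute (L A) (R (.op (-A))) :=
    ContinuousLinearMap.ext fun x => (mul_assoc _ _ _).symm
  have hexp : NormedSpace.exp A * M * NormedSpace.exp (-A) =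
      NormedSpace.exp (L A + R (.op (-A))) M := by
    rw [NormedSpace.exp_add_of_commute hLR, ← NormedSpace.map_exp L hL,
      ← NormedSpace.map_exp R hR, NormedSpace.exp_op, mul_assoc]
    rfl
  rw [hexp]
  refine NormedSpace.exp_mem (Submodule.isClosed_stabilizerCLM hV) (fun v hv => ?_) M hM
  show A * v + v * -A ∈ V
  rw [mul_neg, ← sub_eq_add_neg]
  exact hA v hv

section AnticommutingFamily

variable {R ι : Type*} [Ring R] {c : ι → R}

theorem exists_prod_map_eq_units_smul_of_perm
    (hc : Pairwise fun i j => c i * c j = -(c j * c i)) {l₁ l₂ : List ι} (hp : l₁.Perm l₂) :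
    ∃ ε : ℤˣ, (l₁.map c).prod = ε • (l₂.map c).prod := by
  induction hp with
  | nil => exact ⟨1, (one_smul _ _).symm⟩
  | cons x _ ih =>
    obtain ⟨ε, h⟩ := ih
    exact ⟨ε, by rw [List.map_cons, List.prod_cons, List.map_cons, List.prod_cons, h,
      Units.smul_def, Units.smul_def, mul_smul_comm]⟩
  | swap x y l =>
    by_cases hxy : x = y
    · exact ⟨1, by rw [hxy, one_smul]⟩
    · exact ⟨-1, by simp [← mul_assoc, hc (Ne.symm hxy)]⟩
  | trans _ _ ih₁ ih₂ =>
    obtain ⟨ε₁, h₁⟩ := ih₁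
    obtain ⟨ε₂, h₂⟩ := ih₂
    exact ⟨ε₁ * ε₂, by rw [h₁, h₂, mul_smul]⟩

theorem prod_map_mul_eq_neg_one_pow_smul [DecidableEq ι]
    (hc : Pairwise fun i j => c i * c j = -(c j * c i)) (a : ι) (l : List ι) :
    (l.map c).prod * c a = (-1 : ℤˣ) ^ l.countP (· ≠ a) • (c a * (l.map c).prod) := by
  induction l with
  | nil => simp
  | cons b l ih =>
    rw [List.map_cons, List.prod_cons, mul_assoc, ih, Units.smul_def, mul_smul_comm,
      ← mul_assoc, ← mul_assoc]
    by_cases hb : b = a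
    · simp [hb, Units.smul_def]
    · rw [hc hb, List.countP_cons_of_pos (by simpa using hb), pow_succ, Units.smul_def,
        Units.val_mul, mul_smul]
      simp [mul_assoc]

variable [LinearOrder ι]

variable (c) in
def sortedProd (s : Finset ι) : R := ((s.sort (· ≤ ·)).map c).prod

theorem sortedProd_mul_eq_neg_one_pow_smul (hc : Pairwise fun i j => c i * c j = -(c j * c i))
    (a : ι) (s : Finset ι) :
    sortedProd c s * c a = (-1 : ℤˣ) ^ (s.erase a).card • (c a * sortedProd c s) := by
  rw [sortedProd, prod_map_mul_eq_neg_one_pow_smul hc, ← Finset.filter_ne', Finset.card_def,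
    Finset.filter_val, ← Multiset.countP_eq_card_filter, ← Finset.sort_eq s (· ≤ ·),
    Multiset.coe_countP]

theorem exists_mul_sortedProd_eq_units_smul_insert
    (hc : Pairwise fun i j => c i * c j = -(c j * c i)) {a : ι} {s : Finset ι} (ha : a ∉ s) :
    ∃ ε : ℤˣ, c a * sortedProd c s = ε • sortedProd c (insert a s) := by
  refine exists_prod_map_eq_units_smul_of_perm hc (l₁ := a :: s.sort (· ≤ ·)) ?_
  rw [← Multiset.coe_eq_coe, ← Multiset.cons_coe, Finset.sort_eq, Finset.sort_eq,
    Finset.insert_val_of_notMem ha]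

theorem exists_mul_sortedProd_eq_units_smul_erase
    (hc : Pairwise fun i j => c i * c j = -(c j * c i)) (hsq : ∀ i, c i * c i = 1)
    {a : ι} {s : Finset ι} (ha : a ∈ s) :
    ∃ ε : ℤˣ, c a * sortedProd c s = ε • sortedProd c (s.erase a) := by
  obtain ⟨ε, h⟩ := exists_mul_sortedProd_eq_units_smul_insert hc (Finset.notMem_erase a s)
  rw [Finset.insert_erase ha] at h
  have hs : sortedProd c s = ε • (c a * sortedProd c (s.erase a)) := by
    rw [h, smul_smul, Int.units_mul_self, one_smul]
  refine ⟨ε, ?_⟩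
  rw [hs, Units.smul_def, Units.smul_def, mul_smul_comm, ← mul_assoc, hsq, one_mul]

end AnticommutingFamily

theorem tensor_mul {n : ℕ} (M N : Fin n → Matrix (Fin 2) (Fin 2) ℂ) :
    tensor M * tensor N = tensor fun i => M i * N i := by
  ext f g
  simp only [tensor, Matrix.of_apply, Matrix.mul_apply, Finset.prod_univ_sum,
    Fintype.piFinset_univ, ← Finset.prod_mul_distrib]

theorem tensor_one {n : ℕ} : (tensor fun _ : Fin n => (1 : Matrix (Fin 2) (Fin 2) ℂ)) = 1 := by
  ext f g
  simp [tensor, Matrix.one_apply, Finset.prod_boole, funext_iff]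

theorem tensor_mul_eq_neg {n : ℕ} {M N : Fin n → Matrix (Fin 2) (Fin 2) ℂ} (j₀ : Fin n)
    (h₀ : M j₀ * N j₀ = -(N j₀ * M j₀)) (h : ∀ j ≠ j₀, M j * N j = N j * M j) :
    tensor M * tensor N = -(tensor N * tensor M) := by
  rw [tensor_mul, tensor_mul]
  ext f g
  simp only [tensor, Matrix.of_apply, Matrix.neg_apply,
    ← Finset.mul_prod_erase _ _ (Finset.mem_univ j₀), h₀, neg_mul]
  congr 2
  exact Finset.prod_congr rfl fun j hj => by rw [h j (Finset.ne_of_mem_erase hj)]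

theorem σX_mul_self : σX * σX = 1 := by simp [σX, Matrix.one_fin_two]
theorem σY_mul_self : σY * σY = 1 := by simp [σY, Matrix.one_fin_two]
theorem σZ_mul_self : σZ * σZ = 1 := by simp [σZ, Matrix.one_fin_two]
theorem σX_mul_σY : σX * σY = -(σY * σX) := by simp [σX, σY]
theorem σX_mul_σZ : σX * σZ = -(σZ * σX) := by simp [σX, σZ]
theorem σY_mul_σZ : σY * σZ = -(σZ * σY) := by simp [σY, σZ]

theorem majorana_mul_self {n : ℕ} (μ : Fin (2 * n)) : majorana n μ * majorana n μ = 1 := by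
  rw [majorana, tensor_mul, ← tensor_one]
  congr 1 with j : 1
  split_ifs <;> simp [σX_mul_self, σY_mul_self, σZ_mul_self]

theorem majorana_anticomm (n : ℕ) :
    Pairwise fun μ ν => majorana n μ * majorana n ν = -(majorana n ν * majorana n μ) := by
  intro μ ν hμν
  have hμν' : (μ : ℕ) ≠ ν := Fin.val_ne_of_ne hμν
  -- The factors anticommute on the first qubit where one of them is not `Z`, and commute elsewhere.
  refine tensor_mul_eq_neg ⟨min ((μ : ℕ) / 2) ((ν : ℕ) / 2), by omega⟩ ?_ fun j hj => ?_
  · simp only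
    split_ifs <;> first | omega | simp [σX_mul_σY, σX_mul_σZ, σY_mul_σZ]
  · have hj : (j : ℕ) ≠ min ((μ : ℕ) / 2) ((ν : ℕ) / 2) := fun h => hj (Fin.ext h)
    split_ifs <;> first | omega | simp

theorem cProd_eq_sortedProd (n : ℕ) (s : Finset (Fin (2 * n))) :
    cProd n s = sortedProd (majorana n) s :=
  rfl

theorem cProd_mem_Bspace (n : ℕ) (s : Finset (Fin (2 * n))) : cProd n s ∈ Bspace n s.card :=
  Submodule.subset_span ⟨s, rfl, rfl⟩

theorem majorana_mul_majorana_mul_cProd_mem {n : ℕ} {μ ν : Fin (2 * n)}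
    {s : Finset (Fin (2 * n))} (hμ : μ ∈ s) (hν : ν ∉ s) :
    majorana n μ * majorana n ν * cProd n s ∈ Bspace n s.card := by
  have hμ' : μ ∈ insert ν s := Finset.mem_insert_of_mem hμ
  obtain ⟨ε₁, h₁⟩ := exists_mul_sortedProd_eq_units_smul_insert (majorana_anticomm n) hν
  obtain ⟨ε₂, h₂⟩ :=
    exists_mul_sortedProd_eq_units_smul_erase (majorana_anticomm n) majorana_mul_self hμ'
  have hcard : ((insert ν s).erase μ).card = s.card := by
    rw [Finset.card_erase_of_mem hμ', Finset.card_insert_of_notMem hν, Nat.add_sub_cancel]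
  rw [mul_assoc, cProd_eq_sortedProd, h₁, mul_smul_comm, h₂, smul_smul, Units.smul_def]
  exact Submodule.smul_of_tower_mem _ _ (hcard ▸ cProd_mem_Bspace n _)

theorem majorana_mul_majorana_commutator_cProd_mem {n : ℕ} (μ ν : Fin (2 * n))
    (s : Finset (Fin (2 * n))) :
    majorana n μ * majorana n ν * cProd n s - cProd n s * (majorana n μ * majorana n ν) ∈
      Bspace n s.card := by
  have hcomm := sortedProd_mul_eq_neg_one_pow_smul (majorana_anticomm n)
  have hswap : cProd n s * (majorana n μ * majorana n ν) =
      (-1 : ℤˣ) ^ ((s.erase μ).card + (s.erase ν).card) •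
        (majorana n μ * majorana n ν * cProd n s) := by
    rw [cProd_eq_sortedProd, ← mul_assoc, hcomm, smul_mul_assoc, mul_assoc, hcomm,
      mul_smul_comm, smul_smul, ← pow_add, mul_assoc]
  rw [hswap]
  by_cases hs : μ ∈ s ↔ ν ∈ s
  · have hcard : (s.erase μ).card = (s.erase ν).card := by
      rw [Finset.card_erase_eq_ite, Finset.card_erase_eq_ite, if_congr hs rfl rfl]
    rw [hcard, Even.neg_one_pow ⟨_, rfl⟩, one_smul, sub_self]
    exact zero_mem _
  · have hmem : majorana n μ * majorana n ν * cProd n s ∈ Bspace n s.card := by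
      by_cases hμ : μ ∈ s
      · exact majorana_mul_majorana_mul_cProd_mem hμ (by tauto)
      · rw [majorana_anticomm n (fun h => hs (by rw [h])), neg_mul]
        exact neg_mem (majorana_mul_majorana_mul_cProd_mem (by tauto) hμ)
    rw [Units.smul_def]
    exact sub_mem hmem (Submodule.smul_of_tower_mem _ _ hmem)

theorem quadratic_commutator_mem_Bspace {n κ : ℕ} {A : NMat n}
    (g : Fin (2 * n) → Fin (2 * n) → ℂ)
    (hA : A = ∑ μ, ∑ ν, if μ < ν then g μ ν • (majorana n μ * majorana n ν) else 0)
    {M : NMat n} (hM : M ∈ Bspace n κ) : A * M - M * A ∈ Bspace n κ := by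
  induction hM using Submodule.span_induction with
  | mem x hx =>
    obtain ⟨s, rfl, rfl⟩ := hx
    simp only [hA, Finset.sum_mul, Finset.mul_sum, ← Finset.sum_sub_distrib]
    refine Submodule.sum_mem _ fun μ _ => Submodule.sum_mem _ fun ν _ => ?_
    split_ifs
    · rw [smul_mul_assoc, mul_smul_comm, ← smul_sub]
      exact Submodule.smul_mem _ _ (majorana_mul_majorana_commutator_cProd_mem μ ν s)
    · simp
  | zero => simp
  | add x y _ _ hx hy =>
    rw [mul_add, add_mul, add_sub_add_comm]
    exact add_mem hx hy
  | smul a x _ hx =>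
    rw [mul_smul_comm, smul_mul_assoc, ← smul_sub]
    exact Submodule.smul_mem _ a hx

theorem Bspace_invariant_exp_conj_general (n : ℕ)
    (h : Matrix (Fin (2 * n)) (Fin (2 * n)) ℝ)
    (A : NMat n)
    (hA : A = ∑ μ : Fin (2 * n), ∑ ν : Fin (2 * n),
      if μ < ν then (h μ ν : ℂ) • (majorana n μ * majorana n ν) else 0)
    (κ : ℕ) (M : NMat n) (hM : M ∈ Bspace n κ) :
    NormedSpace.exp A * M * NormedSpace.exp (-A) ∈ Bspace n κ := by
  open scoped Matrix.Norms.Operator in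
  exact exp_mul_mul_exp_neg_mem (Submodule.closed_of_finiteDimensional _)
    (fun _ => quadratic_commutator_mem_Bspace _ hA) hM

/-- Each module `B_κ` is invariant under conjugation by exponentials of elements
`A = Σ_{μ<ν} h_{μν} c_μ c_ν` of the Lie algebra `g = span_ℝ {c_μ c_ν : μ < ν}`. -/
theorem Bspace_invariant_exp_conj (n : ℕ) (hn : 1 ≤ n)
    (h : Matrix (Fin (2 * n)) (Fin (2 * n)) ℝ) (hanti : ∀ μ ν, h ν μ = - h μ ν)
    (A : NMat n)
    (hA : A = ∑ μ : Fin (2 * n), ∑ ν : Fin (2 * n),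
      if μ < ν then (h μ ν : ℂ) • (majorana n μ * majorana n ν) else 0)
    (κ : ℕ) (hκ : κ ≤ 2 * n) (M : NMat n) (hM : M ∈ Bspace n κ) :
    NormedSpace.exp A * M * NormedSpace.exp (-A) ∈ Bspace n κ :=
  Bspace_invariant_exp_conj_general n h A hA κ M hM

end
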